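/- Let $L\subset\mathbb{R}^d$ be a Bravais lattice with first distance $\lambda_1$ and second distance $\lambda_2$, let $r_0\in[\lambda_1,\lambda_2)$, $\varepsilon>0$, $p>d$, $\theta\in[0,\lambda_1/2)$, and let $V$ be a $C^2$ potential with $|V''(r)|\le\theta^{2+\varepsilon}r^{-p-2}$ for all $r>r_0$. Let $B=\{b_1,\dots,b_N\}\subset L$, let $0\le\alpha_0<\lambda_1/2$ satisfy $2\alpha_0<\lambda_2-r_0$, and let $B^{\alpha_0}$ be an $\alpha_0$-compact perturbation of $B$. Then for any choice of real numbers $\xi_{i,x}\in(\|b_i-x\|-|\alpha_{i,x}|,\ \|b_i-x\|+|\alpha_{i,x}|)$, one has $\sum_{i=1}^N\sum_{x\in L,\,\|x-b_i\|>\lambda_1}\alpha_{i,x}^2\,|V''(\xi_{i,x})|\ \le\ 4\,\theta^{2+\varepsilon}\alpha_0^2\,N\,\bar{\zeta}_L(p+2)$. -/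

import Mathlib

noncomputable section
open scoped BigOperators
open scoped Classical

/-- Points of `ℝ^d`. -/
abbrev Esp (d : ℕ) := EuclideanSpace ℝ (Fin d)

/-- `L` is a Bravais lattice of `ℝ^d`: the set of integer linear combinations
of a basis of `ℝ^d`. -/
def IsBravais {d : ℕ} (L : Set (Esp d)) : Prop :=
  ∃ b : Module.Basis (Fin d) ℝ (Esp d),
    L = Set.range fun c : Fin d → ℤ => ∑ i, (c i : ℝ) • b i

/-- First distance `λ₁` of the lattice. -/
def lam1 {d : ℕ} (L : Set (Esp d)) : ℝ :=
  sInf {r | ∃ x ∈ L, x ≠ 0 ∧ ‖x‖ = r}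

/-- Second distance `λ₂` of the lattice. -/
def lam2 {d : ℕ} (L : Set (Esp d)) : ℝ :=
  sInf {r | ∃ x ∈ L, lam1 L < ‖x‖ ∧ ‖x‖ = r}

/-- `m(λ)`: number of lattice points of norm `λ`. -/
def mCard {d : ℕ} (L : Set (Esp d)) (lam : ℝ) : ℕ :=
  Nat.card {x : Esp d // x ∈ L ∧ ‖x‖ = lam}

/-- A `d`-admissible potential: `C²` on `(0,∞)` and with absolutely convergent
lattice sums for `V`, `r V'` and `r² V''` on every Bravais lattice of `ℝ^d`. -/
def Admissible (d : ℕ) (V : ℝ → ℝ) : Prop :=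
  ContDiffOn ℝ 2 V (Set.Ioi 0) ∧
  ∀ L : Set (Esp d), IsBravais L →
    (Summable fun x : {x : Esp d // x ∈ L ∧ x ≠ 0} => |V ‖(x : Esp d)‖|) ∧
    (Summable fun x : {x : Esp d // x ∈ L ∧ x ≠ 0} =>
      ‖(x : Esp d)‖ * |deriv V ‖(x : Esp d)‖|) ∧
    (Summable fun x : {x : Esp d // x ∈ L ∧ x ≠ 0} =>
      ‖(x : Esp d)‖ ^ 2 * |deriv (deriv V) ‖(x : Esp d)‖|)

/-- Pressure of `L` submitted to `V`. -/
def pressure {d : ℕ} (L : Set (Esp d)) (V : ℝ → ℝ) : ℝ :=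
  -∑' x : {x : Esp d // x ∈ L ∧ x ≠ 0}, ‖(x : Esp d)‖ * deriv V ‖(x : Esp d)‖

/-- Lattice sum `ζ*_L(n) = ∑_{x ∈ L, ‖x‖ > λ₁} ‖x‖^{-n}`. -/
def zetaStar {d : ℕ} (L : Set (Esp d)) (n : ℝ) : ℝ :=
  ∑' x : {x : Esp d // x ∈ L ∧ lam1 L < ‖x‖}, ‖(x : Esp d)‖ ^ (-n)

/-- Lattice sum `ζ̄_L(n) = ∑_{x ∈ L, ‖x‖ > λ₁} (‖x‖ - λ₁)^{-n}`. -/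
def zetaBar {d : ℕ} (L : Set (Esp d)) (n : ℝ) : ℝ :=
  ∑' x : {x : Esp d // x ∈ L ∧ lam1 L < ‖x‖}, (‖(x : Esp d)‖ - lam1 L) ^ (-n)

/-- `f` realizes an `α`-compact perturbation `f '' B` of `B`:
each `b ∈ B` is moved to `f b` with `‖b - f b‖ ≤ α`, and `f b` is the unique point of the
perturbed family within distance `α` of `b`. -/
def IsPertMap {d : ℕ} (B : Set (Esp d)) (f : Esp d → Esp d) (α : ℝ) : Prop :=
  ∀ b ∈ B, ‖b - f b‖ ≤ α ∧ ∀ b' ∈ B, ‖b - f b'‖ ≤ α → f b' = f b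

/-- The point of the perturbed configuration corresponding to `x ∈ L`. -/
def pertPoint {d : ℕ} (B : Set (Esp d)) (f : Esp d → Esp d) (x : Esp d) : Esp d :=
  if x ∈ B then f x else x

/-- The perturbed configuration `L^α(B) = (L \ B) ∪ B^α`. -/
def pertLattice {d : ℕ} (L B : Set (Esp d)) (f : Esp d → Esp d) : Set (Esp d) :=
  (L \ B) ∪ f '' B

/-- `α_{i,x} = ‖b_i^α - y‖ - ‖b_i - x‖`. -/
def alphaCoef {d : ℕ} (B : Set (Esp d)) (f : Esp d → Esp d) (b x : Esp d) : ℝ :=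
  ‖f b - pertPoint B f x‖ - ‖b - x‖

/-- The energy difference `Δ_L^α(V; B)` between the perturbed and unperturbed
configurations. -/
def Delta {d : ℕ} (L : Set (Esp d)) (B : Finset (Esp d)) (f : Esp d → Esp d)
    (V : ℝ → ℝ) : ℝ :=
  (∑ b ∈ B, ∑' y : {y : Esp d // y ∈ pertLattice L ↑B f ∧ y ≠ f b}, V ‖f b - (y : Esp d)‖)
  - ∑ b ∈ B, ∑' x : {x : Esp d // x ∈ L ∧ x ≠ b}, V ‖b - (x : Esp d)‖

/-!
Moving the points of `B` by at most `α₀` changes every distance by `|α_{i,x}| ≤ 2α₀`. For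
`‖x - b_i‖ > λ₁` the lattice gap gives `‖x - b_i‖ ≥ λ₂`, and since `2α₀ < λ₂ - r₀` and
`2α₀ < λ₁`, every `ξ_{i,x}` lies beyond `r₀` and above `‖x - b_i‖ - λ₁`. The decay of `V''`
then bounds each term by `4 α₀² θ^{2+ε} (‖x - b_i‖ - λ₁)^{-(p+2)}`, and translating by
`b_i ∈ L` turns the sum over `x` into `ζ̄_L(p+2)`. That series converges because
`‖x‖ - λ₁ ≥ (1 - λ₁/λ₂) ‖x‖` on it and `∑_{x ∈ L} ‖x‖^{-(p+2)}` converges for `p + 2 > d`.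
-/

theorem sub_rpow_neg_le_mul_rpow_neg {lam gap r q : ℝ} (hlam : 0 ≤ lam) (hgap : lam < gap)
    (hr : gap ≤ r) (hq : 0 ≤ q) :
    (r - lam) ^ (-q) ≤ ((gap - lam) / gap) ^ (-q) * r ^ (-q) := by
  have hgap0 : 0 < gap := hlam.trans_lt hgap
  have hscale : r * ((gap - lam) / gap) ≤ r - lam := by
    rw [mul_div_assoc', div_le_iff₀ hgap0]
    nlinarith
  calc (r - lam) ^ (-q) ≤ (r * ((gap - lam) / gap)) ^ (-q) :=
        Real.rpow_le_rpow_of_nonpos (mul_pos (by linarith) (div_pos (by linarith) hgap0)) hscale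
          (neg_nonpos.2 hq)
    _ = ((gap - lam) / gap) ^ (-q) * r ^ (-q) := by
        rw [Real.mul_rpow (by linarith) (by positivity), mul_comm]

theorem summable_norm_sub_rpow_of_gap {E : Type*} [NormedAddCommGroup E] {S : Set E}
    {lam gap q : ℝ} (hlam : 0 ≤ lam) (hgap : lam < gap) (hq : 0 ≤ q)
    (hS : Summable fun x : S => ‖(x : E)‖ ^ (-q)) (hSgap : ∀ x ∈ S, lam < ‖x‖ → gap ≤ ‖x‖) :
    Summable fun x : {x // x ∈ S ∧ lam < ‖x‖} => (‖(x : E)‖ - lam) ^ (-q) := by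
  let ι : {x // x ∈ S ∧ lam < ‖x‖} → S := fun x => ⟨x, x.2.1⟩
  have hι : Function.Injective ι := fun x y h => Subtype.ext (congrArg Subtype.val h :)
  refine ((hS.comp_injective hι).mul_left (((gap - lam) / gap) ^ (-q))).of_nonneg_of_le
    (fun x => Real.rpow_nonneg (by linarith [hSgap x x.2.1 x.2.2]) _) fun x => ?_
  exact sub_rpow_neg_le_mul_rpow_neg hlam hgap (hSgap x x.2.1 x.2.2) hq

theorem lam1_nonneg {d : ℕ} (L : Set (Esp d)) : 0 ≤ lam1 L :=
  Real.sInf_nonneg (by rintro r ⟨x, -, -, rfl⟩; exact norm_nonneg x)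

theorem lam2_le_norm {d : ℕ} {L : Set (Esp d)} {x : Esp d} (hx : x ∈ L)
    (hx1 : lam1 L < ‖x‖) : lam2 L ≤ ‖x‖ :=
  csInf_le ⟨0, by rintro r ⟨y, -, -, rfl⟩; exact norm_nonneg y⟩ ⟨x, hx, hx1, rfl⟩

namespace IsBravais

variable {d : ℕ} {L : Set (Esp d)}

theorem exists_zlattice (hL : IsBravais L) :
    ∃ Λ : Submodule ℤ (Esp d), DiscreteTopology Λ ∧ Module.finrank ℤ Λ = d ∧
      (Λ : Set (Esp d)) = L := by
  obtain ⟨b, rfl⟩ := hL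
  refine ⟨Submodule.span ℤ (Set.range b), inferInstance, ?_, ?_⟩
  · rw [ZLattice.rank ℝ, finrank_euclideanSpace_fin]
  · ext x
    simp [Submodule.mem_span_range_iff_exists_fun, Int.cast_smul_eq_zsmul]

theorem sub_mem_iff_left (hL : IsBravais L) {x b : Esp d} (hb : b ∈ L) :
    x - b ∈ L ↔ x ∈ L := by
  obtain ⟨Λ, -, -, rfl⟩ := hL.exists_zlattice
  exact Submodule.sub_mem_iff_left Λ hb

theorem summable_norm_rpow (hL : IsBravais L) {q : ℝ} (hq : (d : ℝ) < q) :
    Summable fun x : L => ‖(x : Esp d)‖ ^ (-q) := by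
  obtain ⟨Λ, _, hrank, rfl⟩ := hL.exists_zlattice
  exact ZLattice.summable_norm_rpow Λ (-q) (by rw [hrank]; linarith)

theorem summable_zetaBar (hL : IsBravais L) {q : ℝ} (hq : (d : ℝ) < q)
    (hgap : lam1 L < lam2 L) :
    Summable fun x : {x // x ∈ L ∧ lam1 L < ‖x‖} => (‖(x : Esp d)‖ - lam1 L) ^ (-q) :=
  summable_norm_sub_rpow_of_gap (lam1_nonneg L) hgap (by linarith [d.cast_nonneg (α := ℝ)])
    (hL.summable_norm_rpow hq) fun _ hx hx1 => lam2_le_norm hx hx1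

theorem tsum_le_mul_zetaBar (hL : IsBravais L) {b : Esp d} (hb : b ∈ L) {q C : ℝ}
    (hsum : Summable fun x : {x // x ∈ L ∧ lam1 L < ‖x‖} => (‖(x : Esp d)‖ - lam1 L) ^ (-q))
    {g : Esp d → ℝ}
    (hg : ∀ x ∈ L, lam1 L < ‖x - b‖ → 0 ≤ g x ∧ g x ≤ C * (‖x - b‖ - lam1 L) ^ (-q)) :
    ∑' x : {x // x ∈ L ∧ lam1 L < ‖x - b‖}, g x ≤ C * zetaBar L q := by
  let e : {x // x ∈ L ∧ lam1 L < ‖x - b‖} ≃ {y // y ∈ L ∧ lam1 L < ‖y‖} :=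
    (Equiv.subRight b).subtypeEquiv fun x => by simp [hL.sub_mem_iff_left hb]
  have hsum_b := (hsum.comp_injective e.injective).mul_left C
  have hsum_g : Summable fun x : {x // x ∈ L ∧ lam1 L < ‖x - b‖} => g x :=
    hsum_b.of_nonneg_of_le (fun x => (hg x x.2.1 x.2.2).1) fun x => (hg x x.2.1 x.2.2).2
  calc ∑' x : {x // x ∈ L ∧ lam1 L < ‖x - b‖}, g x
      ≤ ∑' x : {x // x ∈ L ∧ lam1 L < ‖x - b‖}, C * (‖(x : Esp d) - b‖ - lam1 L) ^ (-q) :=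
        hsum_g.tsum_le_tsum (fun x => (hg x x.2.1 x.2.2).2) hsum_b
    _ = C * zetaBar L q := by
        rw [tsum_mul_left, zetaBar, ← e.tsum_eq]
        rfl

end IsBravais

section Perturbation

variable {d : ℕ} {B : Set (Esp d)} {f : Esp d → Esp d} {α : ℝ}

theorem norm_pertPoint_sub_le (hf : IsPertMap B f α) (hα : 0 ≤ α) (x : Esp d) :
    ‖pertPoint B f x - x‖ ≤ α := by
  unfold pertPoint
  split_ifs with hx
  · exact norm_sub_rev (f x) x ▸ (hf x hx).1
  · simpa using hα

theorem abs_alphaCoef_le (hf : IsPertMap B f α) (hα : 0 ≤ α) {b : Esp d} (hb : b ∈ B)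
    (x : Esp d) : |alphaCoef B f b x| ≤ 2 * α :=
  calc |alphaCoef B f b x| ≤ ‖(f b - pertPoint B f x) - (b - x)‖ := abs_norm_sub_norm_le _ _
    _ = ‖(f b - b) - (pertPoint B f x - x)‖ := by congr 1; abel
    _ ≤ ‖f b - b‖ + ‖pertPoint B f x - x‖ := norm_sub_le _ _
    _ ≤ 2 * α := by
        linarith [norm_sub_rev b (f b) ▸ (hf b hb).1, norm_pertPoint_sub_le hf hα x]

end Perturbation

theorem sq_mul_abs_le_of_rpow_decay {g : ℝ → ℝ} {C r0 q a t ξ lam α : ℝ}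
    (hg : ∀ r, r0 < r → |g r| ≤ C * r ^ (-q)) (hC : 0 ≤ C) (hq : 0 ≤ q)
    (ha : |a| ≤ α) (hξ : t - |a| < ξ) (hr0 : r0 + α ≤ t) (hα : α ≤ lam) (ht : lam < t) :
    a ^ 2 * |g ξ| ≤ α ^ 2 * C * (t - lam) ^ (-q) := by
  have hξ_decay : ξ ^ (-q) ≤ (t - lam) ^ (-q) :=
    Real.rpow_le_rpow_of_nonpos (by linarith) (by linarith) (neg_nonpos.2 hq)
  have ha2 : a ^ 2 ≤ α ^ 2 := sq_abs a ▸ pow_le_pow_left₀ (abs_nonneg a) ha 2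
  calc a ^ 2 * |g ξ| ≤ α ^ 2 * (C * (t - lam) ^ (-q)) :=
        mul_le_mul ha2 ((hg ξ (by linarith)).trans (mul_le_mul_of_nonneg_left hξ_decay hC))
          (abs_nonneg _) (sq_nonneg _)
    _ = α ^ 2 * C * (t - lam) ^ (-q) := (mul_assoc _ _ _).symm

theorem statement4_general (d : ℕ) (L : Set (Esp d)) (hL : IsBravais L)
    (r0 ε p : ℝ) (hr0 : lam1 L ≤ r0) (hr0' : r0 < lam2 L)
    (hp : (d : ℝ) < p)
    (θ : ℝ) (hθ : 0 ≤ θ)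
    (V : ℝ → ℝ)
    (hV'' : ∀ r : ℝ, r0 < r → |deriv (deriv V) r| ≤ θ ^ (2 + ε) * r ^ (-p - 2))
    (N : ℕ) (B : Finset (Esp d)) (hB : ↑B ⊆ L) (hcard : B.card = N)
    (α0 : ℝ) (hα0 : 0 ≤ α0) (hα0' : α0 < lam1 L / 2) (hα0r : 2 * α0 < lam2 L - r0)
    (f : Esp d → Esp d) (hf : IsPertMap ↑B f α0)
    (ξ : Esp d → Esp d → ℝ)
    (hξ : ∀ b ∈ B, ∀ x ∈ L, lam1 L < ‖x - b‖ →
      ξ b x ∈ Set.Ioo (‖b - x‖ - |alphaCoef ↑B f b x|) (‖b - x‖ + |alphaCoef ↑B f b x|)) :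
    (∑ b ∈ B, ∑' x : {x : Esp d // x ∈ L ∧ lam1 L < ‖(x : Esp d) - b‖},
        (alphaCoef ↑B f b (x : Esp d)) ^ 2 * |deriv (deriv V) (ξ b (x : Esp d))|) ≤
      4 * θ ^ (2 + ε) * α0 ^ 2 * (N : ℝ) * zetaBar L (p + 2) := by
  have hsum := hL.summable_zetaBar (by linarith : (d : ℝ) < p + 2) (hr0.trans_lt hr0')
  have hV''_decay (r : ℝ) (hr : r0 < r) :
      |deriv (deriv V) r| ≤ θ ^ (2 + ε) * r ^ (-(p + 2)) := neg_add' p 2 ▸ hV'' r hr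
  calc _ ≤ ∑ _b ∈ B, (2 * α0) ^ 2 * θ ^ (2 + ε) * zetaBar L (p + 2) := by
        gcongr with b hb
        refine hL.tsum_le_mul_zetaBar (hB hb) hsum
          (g := fun x => alphaCoef ↑B f b x ^ 2 * |deriv (deriv V) (ξ b x)|) fun x hx hxb => ?_
        have hlam2 := lam2_le_norm ((hL.sub_mem_iff_left (hB hb)).2 hx) hxb
        have hξx := (hξ b hb x hx hxb).1
        rw [norm_sub_rev] at hξx
        exact ⟨by positivity, sq_mul_abs_le_of_rpow_decay hV''_decay (Real.rpow_nonneg hθ _)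
          (by linarith) (abs_alphaCoef_le hf hα0 hb x) hξx (by linarith) (by linarith) hxb⟩
    _ = 4 * θ ^ (2 + ε) * α0 ^ 2 * (N : ℝ) * zetaBar L (p + 2) := by
        rw [Finset.sum_const, hcard, nsmul_eq_mul]; ring

/-- upper bound on the long-range second-order term
`∑_{i=1}^N ∑_{x ∈ L, ‖x - b_i‖ > λ₁} α_{i,x}² |V''(ξ_{i,x})| ≤ 4 θ^{2+ε} α₀² N ζ̄_L(p+2)`. -/
theorem statement4 (d : ℕ) (L : Set (Esp d)) (hL : IsBravais L)
    (r0 ε p : ℝ) (hr0 : lam1 L ≤ r0) (hr0' : r0 < lam2 L)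
    (hε : 0 < ε) (hp : (d : ℝ) < p)
    (θ : ℝ) (hθ : 0 ≤ θ) (hθ' : θ < lam1 L / 2)
    (V : ℝ → ℝ) (hV : ContDiffOn ℝ 2 V (Set.Ioi (0 : ℝ)))
    (hV'' : ∀ r : ℝ, r0 < r → |deriv (deriv V) r| ≤ θ ^ (2 + ε) * r ^ (-p - 2))
    (N : ℕ) (B : Finset (Esp d)) (hB : ↑B ⊆ L) (hcard : B.card = N)
    (α0 : ℝ) (hα0 : 0 ≤ α0) (hα0' : α0 < lam1 L / 2) (hα0r : 2 * α0 < lam2 L - r0)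
    (f : Esp d → Esp d) (hf : IsPertMap ↑B f α0)
    (ξ : Esp d → Esp d → ℝ)
    (hξ : ∀ b ∈ B, ∀ x ∈ L, lam1 L < ‖x - b‖ →
      ξ b x ∈ Set.Ioo (‖b - x‖ - |alphaCoef ↑B f b x|) (‖b - x‖ + |alphaCoef ↑B f b x|)) :
    (∑ b ∈ B, ∑' x : {x : Esp d // x ∈ L ∧ lam1 L < ‖(x : Esp d) - b‖},
        (alphaCoef ↑B f b (x : Esp d)) ^ 2 * |deriv (deriv V) (ξ b (x : Esp d))|) ≤
      4 * θ ^ (2 + ε) * α0 ^ 2 * (N : ℝ) * zetaBar L (p + 2) :=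
  statement4_general d L hL r0 ε p hr0 hr0' hp θ hθ V hV'' N B hB hcard α0 hα0 hα0' hα0r f hf ξ hξ
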